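/- The affine surface in ℂ³ defined by x₁x₂x₃ + x₁² − x₂² − 1 = 0 is nonsingular. -/
import Mathlib


open MvPolynomial

/-- The monodromy space for Painlevé III(D8). -/
noncomputable def cubicD8 : MvPolynomial (Fin 3) ℂ :=
  X 0 * X 1 * X 2 + X 0 ^ 2 - X 1 ^ 2 - 1

/-- The affine surface `x₁x₂x₃ + x₁² − x₂² − 1 = 0` in `ℂ³` is nonsingular: at every
point of the surface not all three partial derivatives vanish. -/
theorem stmt_4 :
    ∀ p : Fin 3 → ℂ, eval p cubicD8 = 0 → ∃ i : Fin 3, eval p (pderiv i cubicD8) ≠ 0 := by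
  intro p hp
  by_contra h
  push_neg at h
  have h0 := h 0
  have h1 := h 1
  have h2 := h 2
  simp [cubicD8, Pi.single_apply] at hp h0 h1 h2
  rcases h2 with hx | hy
  · rw [hx] at h1 hp
    simp at h1
    rw [h1] at hp
    simp at hp
  · rw [hy] at h0 hp
    simp at h0
    rw [h0] at hp
    simp at hp
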